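/- arXiv:2505.05099 — 4 statements merged into one kernel-verified Lean document; each statement's English description precedes it below -/
import Mathlib

section
/- The vector (π_0, π_1, …, π_{m'}) defined by π_0 = 1 / D, π_i = (∏_{j=0}^{i-1}(1-p_j)) / D for i ∈ {1,…,m'-1}, and π_{m'} = ((1/p_{m'})·∏_{j=0}^{m'-1}(1-p_j)) / D, where D = 1 + ∑_{i=0}^{m'-2} ∏_{j=0}^{i}(1-p_j) + (1/p_{m'})·∏_{j=0}^{m'-1}(1-p_j), is a stationary distribution of the age Markov chain: all entries are nonnegative, they sum to 1, and the vector is invariant under the transition kernel of the chain. -/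
open Finset

noncomputable section

/-- Transition kernel of the age Markov chain on states `{0, 1, …, m'}`:
from state `j < m'` it moves to `0` with probability `p j` and to `j+1` with
probability `1 - p j`; from state `m'` it moves to `0` with probability `p m'`
and stays at `m'` with probability `1 - p m'`. -/
def ageKernel (m' : ℕ) (p : ℕ → ℝ) (j i : ℕ) : ℝ :=
  if i = 0 then p j
  else if j < m' ∧ i = j + 1 then 1 - p j
  else if j = m' ∧ i = m' then 1 - p m'
  else 0

/-- The explicit vector `(π_0, …, π_{m'})` is a stationary distribution of the
age Markov chain: entries are nonnegative, sum to `1`, and the vector is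
invariant under the transition kernel. -/
theorem age_chain_stationary_distribution
    (m' : ℕ) (hm' : 1 ≤ m') (p : ℕ → ℝ)
    (hp : ∀ j ≤ m', p j ∈ Set.Icc (0 : ℝ) 1) (hpm' : 0 < p m') :
    let D : ℝ := 1 + (∑ i ∈ Finset.range (m' - 1), ∏ j ∈ Finset.range (i + 1), (1 - p j))
      + (1 / p m') * ∏ j ∈ Finset.range m', (1 - p j)
    let π : ℕ → ℝ := fun i =>
      (if i < m' then ∏ j ∈ Finset.range i, (1 - p j)
        else (1 / p m') * ∏ j ∈ Finset.range m', (1 - p j)) / D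
    (∀ i ≤ m', 0 ≤ π i) ∧
    (∑ i ∈ Finset.range (m' + 1), π i = 1) ∧
    (∀ i ≤ m', π i = ∑ j ∈ Finset.range (m' + 1), π j * ageKernel m' p j i) := by
  intro D π
  set q : ℕ → ℝ := fun i => ∏ j ∈ Finset.range i, (1 - p j) with hqdef
  have hπ : ∀ i, π i = (if i < m' then q i else (1 / p m') * q m') / D := fun i => rfl
  have hq : ∀ i, i ≤ m' → 0 ≤ q i := by
    intro i hi
    apply Finset.prod_nonneg
    intro j hj
    have hj' : j ≤ m' := le_of_lt (lt_of_lt_of_le (Finset.mem_range.mp hj) hi)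
    have := (hp j hj').2
    linarith
  have hsum0 : 0 ≤ ∑ i ∈ Finset.range (m' - 1), q (i + 1) := by
    apply Finset.sum_nonneg
    intro i hi
    exact hq (i + 1) (by have := Finset.mem_range.mp hi; omega)
  have hlast : 0 ≤ (1 / p m') * q m' :=
    mul_nonneg (by positivity) (hq m' le_rfl)
  have hDval : D = 1 + (∑ i ∈ Finset.range (m' - 1), q (i + 1)) + (1 / p m') * q m' := rfl
  have hD : 0 < D := by rw [hDval]; linarith
  have hDne : D ≠ 0 := ne_of_gt hD
  have hpne : p m' ≠ 0 := ne_of_gt hpm'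
  -- the sum of products equals the numerator of D
  have hDsum : (∑ i ∈ Finset.range m', q i) + (1 / p m') * q m' = D := by
    obtain ⟨n, rfl⟩ : ∃ n, m' = n + 1 := ⟨m' - 1, by omega⟩
    rw [hDval, Finset.sum_range_succ']
    have hq0 : q 0 = 1 := Finset.prod_range_zero _
    simp only [Nat.add_sub_cancel, hq0]
    ring
  -- telescoping identity
  have htel : ∑ j ∈ Finset.range m', q j * p j = 1 - q m' := by
    have hstep : ∀ j ∈ Finset.range m', q j * p j = q j - q (j + 1) := by
      intro j hj
      have : q (j + 1) = q j * (1 - p j) := Finset.prod_range_succ _ j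
      rw [this]; ring
    rw [Finset.sum_congr rfl hstep, Finset.sum_range_sub']
    have hq0 : q 0 = 1 := Finset.prod_range_zero _
    rw [hq0]
  refine ⟨?_, ?_, ?_⟩
  · -- nonnegativity
    intro i hi
    rw [hπ i]
    apply div_nonneg _ (le_of_lt hD)
    by_cases h : i < m'
    · rw [if_pos h]; exact hq i hi
    · rw [if_neg h]; exact hlast
  · -- sums to 1
    rw [Finset.sum_range_succ]
    have hcongr : ∀ i ∈ Finset.range m', π i = q i / D := by
      intro i hi
      rw [hπ i, if_pos (Finset.mem_range.mp hi)]
    rw [Finset.sum_congr rfl hcongr, hπ m', if_neg (lt_irrefl m'), ← Finset.sum_div,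
      ← add_div, hDsum, div_self hDne]
  · -- stationarity
    intro i hi
    rcases Nat.eq_zero_or_pos i with rfl | hipos
    · -- i = 0
      have hK : ∀ j, ageKernel m' p j 0 = p j := by intro j; simp [ageKernel]
      simp only [hK]
      rw [Finset.sum_range_succ]
      have hcongr : ∀ j ∈ Finset.range m', π j * p j = q j * p j / D := by
        intro j hj
        rw [hπ j, if_pos (Finset.mem_range.mp hj)]
        ring
      rw [Finset.sum_congr rfl hcongr, ← Finset.sum_div, htel, hπ 0,
        if_pos (by omega : 0 < m'), hπ m', if_neg (lt_irrefl m')]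
      have hq0 : q 0 = 1 := Finset.prod_range_zero _
      rw [hq0]
      field_simp
      ring
    · rcases lt_or_eq_of_le hi with hlt | heq
      · -- 0 < i < m'
        obtain ⟨k, rfl⟩ : ∃ k, i = k + 1 := ⟨i - 1, by omega⟩
        have hterm : ∀ j ∈ Finset.range (m' + 1), π j * ageKernel m' p j (k + 1) =
            if j = k then π k * (1 - p k) else 0 := by
          intro j hj
          unfold ageKernel
          by_cases h : j = k
          · subst h
            rw [if_neg (by omega), if_pos ⟨by omega, rfl⟩, if_pos rfl]
          · rw [if_neg (by omega : ¬ (k + 1 = 0)),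
              if_neg (by omega : ¬ (j < m' ∧ k + 1 = j + 1)),
              if_neg (by omega : ¬ (j = m' ∧ k + 1 = m')), if_neg h, mul_zero]
        rw [Finset.sum_congr rfl hterm,
          Finset.sum_ite_eq' (Finset.range (m' + 1)) k (fun _ => π k * (1 - p k)),
          if_pos (Finset.mem_range.mpr (by omega))]
        rw [hπ (k + 1), if_pos hlt, hπ k, if_pos (by omega)]
        have hstep : q (k + 1) = q k * (1 - p k) := Finset.prod_range_succ _ k
        rw [hstep]
        ring
      · -- i = m'
        obtain ⟨n, hn⟩ : ∃ n, m' = n + 1 := ⟨m' - 1, by omega⟩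
        subst hn
        subst heq
        have hterm : ∀ j ∈ Finset.range (n + 1 + 1), π j * ageKernel (n + 1) p j (n + 1) =
            (if j = n then π n * (1 - p n) else 0)
              + (if j = n + 1 then π (n + 1) * (1 - p (n + 1)) else 0) := by
          intro j hj
          unfold ageKernel
          by_cases h1 : j = n
          · subst h1
            rw [if_neg (by omega), if_pos ⟨by omega, rfl⟩, if_pos rfl, if_neg (by omega)]
            ring
          · by_cases h2 : j = n + 1
            · subst h2
              rw [if_neg (by omega : ¬ (n + 1 = 0)),
                if_neg (by omega : ¬ (n + 1 < n + 1 ∧ n + 1 = n + 1 + 1)),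
                if_pos ⟨rfl, rfl⟩, if_neg (by omega), if_pos rfl]
              ring
            · rw [if_neg (by omega : ¬ (n + 1 = 0)),
                if_neg (by omega : ¬ (j < n + 1 ∧ n + 1 = j + 1)),
                if_neg (by omega : ¬ (j = n + 1 ∧ n + 1 = n + 1)),
                if_neg h1, if_neg h2, mul_zero]
              ring
        rw [Finset.sum_congr rfl hterm, Finset.sum_add_distrib,
          Finset.sum_ite_eq' (Finset.range (n + 1 + 1)) n (fun _ => π n * (1 - p n)),
          Finset.sum_ite_eq' (Finset.range (n + 1 + 1)) (n + 1)
            (fun _ => π (n + 1) * (1 - p (n + 1))),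
          if_pos (Finset.mem_range.mpr (by omega)),
          if_pos (Finset.mem_range.mpr (by omega))]
        rw [hπ (n + 1), if_neg (lt_irrefl (n + 1)), hπ n, if_pos (by omega)]
        have hstep : q (n + 1) = q n * (1 - p n) := Finset.prod_range_succ _ n
        rw [hstep]
        field_simp
        ring
end
end

section
/- Let X be the first return time to state 0 of the age Markov chain started at state 0. Then the distribution of X is: P(X = i+1) = p_i · ∏_{j=0}^{i-1}(1-p_j) for each i ∈ {0, 1, …, m'-1}, and P(X = m'+1+k) = (1-p_{m'})^k · p_{m'} · ∏_{j=0}^{m'-1}(1-p_j) for each integer k ≥ 0; in particular X is almost surely finite. -/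
open MeasureTheory ProbabilityTheory Finset
open scoped ProbabilityTheory ENNReal

noncomputable section

/-- The age Markov chain on `{0, 1, …, m'}` started at state `0`, driven by a
sequence `U` of random numbers: at time `t`, if the chain is in state `j`, it
moves to `0` when `U t < p j` (an event of probability `p j` for `U t` uniform
on `[0,1]`) and otherwise moves to `min (j+1) m'` (i.e. to `j+1` when `j < m'`
and stays at `m'` when `j = m'`). -/
def ageChain {Ω : Type*} (m' : ℕ) (p : ℕ → ℝ) (U : ℕ → Ω → ℝ) : ℕ → Ω → ℕ
  | 0, _ => 0
  | t + 1, ω =>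
      if U t ω < p (ageChain m' p U t ω) then 0
      else min (ageChain m' p U t ω + 1) m'

/-- The first return time to state `0` of the age chain started at `0`
(`0` if the chain never returns). -/
def firstReturn {Ω : Type*} (m' : ℕ) (p : ℕ → ℝ) (U : ℕ → Ω → ℝ) (ω : Ω) : ℕ :=
  sInf {t | 1 ≤ t ∧ ageChain m' p U t ω = 0}

/-- If no reset occurred before time `n`, the age at time `t ≤ n` is `min t m'`. -/
lemma ageChain_eq_min {Ω : Type*} (m' : ℕ) (p : ℕ → ℝ) (U : ℕ → Ω → ℝ) (ω : Ω)
    (n : ℕ) (h : ∀ j < n, p (min j m') ≤ U j ω) :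
    ∀ t ≤ n, ageChain m' p U t ω = min t m' := by
  intro t
  induction t with
  | zero => intro _; simp [ageChain]
  | succ t ih =>
    intro ht
    have h1 : ageChain m' p U t ω = min t m' := ih (by omega)
    have h2 : ¬ U t ω < p (min t m') := not_lt.2 (h t (by omega))
    simp only [ageChain, h1, if_neg h2]
    omega

/-- Characterisation of the first return time in terms of the driving noise. -/
lemma firstReturn_eq_iff {Ω : Type*} (m' : ℕ) (hm' : 1 ≤ m') (p : ℕ → ℝ)
    (U : ℕ → Ω → ℝ) (ω : Ω) (n : ℕ) :
    firstReturn m' p U ω = n + 1 ↔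
      (∀ j < n, p (min j m') ≤ U j ω) ∧ U n ω < p (min n m') := by
  constructor
  · intro h
    have hne : {t | 1 ≤ t ∧ ageChain m' p U t ω = 0}.Nonempty := by
      by_contra hc
      rw [Set.not_nonempty_iff_eq_empty] at hc
      rw [firstReturn, hc, Nat.sInf_empty] at h
      omega
    have hmem := Nat.sInf_mem hne
    rw [show sInf {t | 1 ≤ t ∧ ageChain m' p U t ω = 0} = firstReturn m' p U ω from rfl, h] at hmem
    have hnot : ∀ t < n + 1, t ∉ {t | 1 ≤ t ∧ ageChain m' p U t ω = 0} := by
      intro t ht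
      rw [← h] at ht
      exact Nat.notMem_of_lt_sInf ht
    have key : ∀ j, j < n → p (min j m') ≤ U j ω := by
      intro j
      induction j using Nat.strong_induction_on with
      | _ j ih =>
        intro hj
        by_contra hc
        push_neg at hc
        have hage : ageChain m' p U j ω = min j m' :=
          ageChain_eq_min m' p U ω j (fun k hk => ih k hk (hk.trans hj)) j le_rfl
        have : ageChain m' p U (j+1) ω = 0 := by
          simp only [ageChain, hage, if_pos hc]
        exact hnot (j+1) (by omega) ⟨by omega, this⟩
    refine ⟨key, ?_⟩
    have hage : ageChain m' p U n ω = min n m' :=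
      ageChain_eq_min m' p U ω n key n le_rfl
    by_contra hc
    push_neg at hc
    have : ageChain m' p U (n+1) ω = min (min n m' + 1) m' := by
      simp only [ageChain, hage, if_neg (not_lt.2 hc)]
    rw [hmem.2] at this
    omega
  · rintro ⟨h1, h2⟩
    have hage : ∀ t ≤ n, ageChain m' p U t ω = min t m' :=
      ageChain_eq_min m' p U ω n h1
    have hmem : n + 1 ∈ {t | 1 ≤ t ∧ ageChain m' p U t ω = 0} := by
      refine ⟨by omega, ?_⟩
      simp only [ageChain, hage n le_rfl, if_pos h2]
    have hnot : ∀ t < n + 1, t ∉ {t | 1 ≤ t ∧ ageChain m' p U t ω = 0} := by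
      rintro t ht ⟨ht1, ht2⟩
      rw [hage t (by omega)] at ht2
      omega
    refine le_antisymm (Nat.sInf_le hmem) ?_
    by_contra hc
    push_neg at hc
    exact hnot _ hc (Nat.sInf_mem ⟨_, hmem⟩)

lemma prob_Iio {Ω : Type*} [MeasureSpace Ω]
    (U : ℕ → Ω → ℝ) (hUmeas : ∀ t, Measurable (U t))
    (hUunif : ∀ t, Measure.map (U t) ℙ = volume.restrict (Set.Icc (0 : ℝ) 1))
    (t : ℕ) (c : ℝ) (hc1 : c ≤ 1) :
    ℙ (U t ⁻¹' Set.Iio c) = ENNReal.ofReal c := by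
  rw [← Measure.map_apply (hUmeas t) measurableSet_Iio, hUunif t,
    Measure.restrict_apply measurableSet_Iio]
  have : Set.Iio c ∩ Set.Icc (0:ℝ) 1 = Set.Ico 0 c := by
    ext x
    simp only [Set.mem_inter_iff, Set.mem_Iio, Set.mem_Icc, Set.mem_Ico]
    constructor
    · rintro ⟨h1, h2, h3⟩; exact ⟨h2, h1⟩
    · rintro ⟨h1, h2⟩; exact ⟨h2, h1, by linarith⟩
  rw [this, Real.volume_Ico, sub_zero]

lemma prob_Ici {Ω : Type*} [MeasureSpace Ω]
    (U : ℕ → Ω → ℝ) (hUmeas : ∀ t, Measurable (U t))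
    (hUunif : ∀ t, Measure.map (U t) ℙ = volume.restrict (Set.Icc (0 : ℝ) 1))
    (t : ℕ) (c : ℝ) (hc0 : 0 ≤ c) :
    ℙ (U t ⁻¹' Set.Ici c) = ENNReal.ofReal (1 - c) := by
  rw [← Measure.map_apply (hUmeas t) measurableSet_Ici, hUunif t,
    Measure.restrict_apply measurableSet_Ici]
  have : Set.Ici c ∩ Set.Icc (0:ℝ) 1 = Set.Icc c 1 := by
    ext x
    simp only [Set.mem_inter_iff, Set.mem_Ici, Set.mem_Icc]
    constructor
    · rintro ⟨h1, h2, h3⟩; exact ⟨h1, h3⟩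
    · rintro ⟨h1, h2⟩; exact ⟨h1, by linarith, h2⟩
  rw [this, Real.volume_Icc]

/-- Probability that the first `n` draws are "no reset" and draw `n` is a reset. -/
lemma prob_block {Ω : Type*} [MeasureSpace Ω] [IsProbabilityMeasure (ℙ : Measure Ω)]
    (m' : ℕ) (p : ℕ → ℝ)
    (hp : ∀ j ≤ m', p j ∈ Set.Icc (0 : ℝ) 1)
    (U : ℕ → Ω → ℝ) (hUmeas : ∀ t, Measurable (U t))
    (hUindep : iIndepFun U ℙ)
    (hUunif : ∀ t, Measure.map (U t) ℙ = volume.restrict (Set.Icc (0 : ℝ) 1))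
    (n : ℕ) :
    ℙ {ω | (∀ j < n, p (min j m') ≤ U j ω) ∧ U n ω < p (min n m')}
      = (∏ j ∈ Finset.range n, ENNReal.ofReal (1 - p (min j m')))
        * ENNReal.ofReal (p (min n m')) := by
  set B : ℕ → Set ℝ := fun j =>
    if j = n then Set.Iio (p (min n m')) else Set.Ici (p (min j m')) with hB
  have hBmeas : ∀ j, j ∈ Finset.range (n+1) → MeasurableSet (B j) := by
    intro j _
    have hBj : B j = if j = n then Set.Iio (p (min n m')) else Set.Ici (p (min j m')) := rfl
    rw [hBj]
    split_ifs
    · exact measurableSet_Iio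
    · exact measurableSet_Ici
  have hset : {ω : Ω | (∀ j < n, p (min j m') ≤ U j ω) ∧ U n ω < p (min n m')}
      = ⋂ j ∈ Finset.range (n+1), U j ⁻¹' B j := by
    ext ω
    simp only [Set.mem_setOf_eq, Set.mem_iInter, Finset.mem_range, Set.mem_preimage, hB]
    constructor
    · rintro ⟨h1, h2⟩ j hj
      by_cases hjn : j = n
      · subst hjn; simp [h2]
      · rw [if_neg hjn]; exact h1 j (by omega)
    · intro h
      constructor
      · intro j hj
        have := h j (by omega)
        rwa [if_neg (by omega)] at this
      · have := h n (by omega)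
        rwa [if_pos rfl] at this
  rw [hset, hUindep.measure_inter_preimage_eq_mul (Finset.range (n+1)) hBmeas,
    Finset.prod_range_succ]
  congr 1
  · apply Finset.prod_congr rfl
    intro j hj
    rw [Finset.mem_range] at hj
    rw [hB]
    simp only [if_neg (by omega : j ≠ n)]
    exact prob_Ici U hUmeas hUunif j _ (hp _ (min_le_right _ _)).1
  · rw [hB]
    simp only [if_pos rfl]
    exact prob_Iio U hUmeas hUunif n _ (hp _ (min_le_right _ _)).2

/-- Distribution of the first return time `X` to state `0`:
`P(X = i+1) = p_i ∏_{j<i} (1-p_j)` for `i < m'`,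
`P(X = m'+1+k) = (1-p_{m'})^k p_{m'} ∏_{j<m'} (1-p_j)` for `k ≥ 0`,
and `X` is almost surely finite (the chain almost surely returns to `0`). -/
theorem firstReturn_distribution
    {Ω : Type*} [MeasureSpace Ω] [IsProbabilityMeasure (ℙ : Measure Ω)]
    (m' : ℕ) (hm' : 1 ≤ m') (p : ℕ → ℝ)
    (hp : ∀ j ≤ m', p j ∈ Set.Icc (0 : ℝ) 1) (hpm' : 0 < p m')
    (U : ℕ → Ω → ℝ) (hUmeas : ∀ t, Measurable (U t))
    (hUindep : iIndepFun U ℙ)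
    (hUunif : ∀ t, Measure.map (U t) ℙ = volume.restrict (Set.Icc (0 : ℝ) 1)) :
    (∀ i < m', ℙ {ω | firstReturn m' p U ω = i + 1}
        = ENNReal.ofReal (p i * ∏ j ∈ Finset.range i, (1 - p j))) ∧
    (∀ k : ℕ, ℙ {ω | firstReturn m' p U ω = m' + 1 + k}
        = ENNReal.ofReal ((1 - p m') ^ k * p m' * ∏ j ∈ Finset.range m', (1 - p j))) ∧
    ℙ {ω | ∃ t, 1 ≤ t ∧ ageChain m' p U t ω = 0} = 1 := by
  have hretn : ∀ n : ℕ, ℙ {ω | firstReturn m' p U ω = n + 1}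
      = (∏ j ∈ Finset.range n, ENNReal.ofReal (1 - p (min j m')))
        * ENNReal.ofReal (p (min n m')) := by
    intro n
    have : {ω : Ω | firstReturn m' p U ω = n + 1}
        = {ω | (∀ j < n, p (min j m') ≤ U j ω) ∧ U n ω < p (min n m')} := by
      ext ω
      exact firstReturn_eq_iff m' hm' p U ω n
    rw [this]
    exact prob_block m' p hp U hUmeas hUindep hUunif n
  refine ⟨?_, ?_, ?_⟩
  · intro i hi
    rw [hretn i, min_eq_left hi.le]
    have h1 : ∀ j ∈ Finset.range i, ENNReal.ofReal (1 - p (min j m'))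
        = ENNReal.ofReal (1 - p j) := by
      intro j hj
      rw [Finset.mem_range] at hj
      rw [min_eq_left (by omega)]
    rw [Finset.prod_congr rfl h1,
      ← ENNReal.ofReal_prod_of_nonneg (fun j hj => by
        rw [Finset.mem_range] at hj
        have := hp j (by omega); linarith [this.2]),
      ← ENNReal.ofReal_mul (Finset.prod_nonneg (fun j hj => by
        rw [Finset.mem_range] at hj
        have := hp j (by omega); linarith [this.2])),
      mul_comm]
  · intro k
    have hk : m' + 1 + k = (m' + k) + 1 := by omega
    rw [hk, hretn (m' + k), min_eq_right (by omega), Finset.prod_range_add]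
    have h1 : ∀ j ∈ Finset.range m', ENNReal.ofReal (1 - p (min j m'))
        = ENNReal.ofReal (1 - p j) := by
      intro j hj
      rw [Finset.mem_range] at hj
      rw [min_eq_left (by omega)]
    have h2 : ∀ j ∈ Finset.range k, ENNReal.ofReal (1 - p (min (m' + j) m'))
        = ENNReal.ofReal (1 - p m') := by
      intro j hj
      rw [min_eq_right (by omega)]
    have hnn : ∀ j ≤ m', (0:ℝ) ≤ 1 - p j := fun j hj => by
      have := hp j hj; linarith [this.2]
    rw [Finset.prod_congr rfl h1, Finset.prod_congr rfl h2, Finset.prod_const,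
      Finset.card_range,
      ← ENNReal.ofReal_prod_of_nonneg (fun j hj => by
        rw [Finset.mem_range] at hj
        exact hnn j (by omega)),
      ← ENNReal.ofReal_pow (hnn m' le_rfl),
      ← ENNReal.ofReal_mul (Finset.prod_nonneg (fun j hj => by
        rw [Finset.mem_range] at hj
        exact hnn j (by omega))),
      ← ENNReal.ofReal_mul (mul_nonneg (Finset.prod_nonneg (fun j hj => by
        rw [Finset.mem_range] at hj
        exact hnn j (by omega))) (pow_nonneg (hnn m' le_rfl) k))]
    congr 1
    ring
  · -- almost sure return
    set E := {ω : Ω | ∃ t, 1 ≤ t ∧ ageChain m' p U t ω = 0} with hE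
    have hsub : ∀ k : ℕ, Eᶜ ⊆ ⋂ j ∈ Finset.Ico m' (m' + k), U j ⁻¹' Set.Ici (p m') := by
      intro k ω hω
      have hnever : ∀ t, 1 ≤ t → ageChain m' p U t ω ≠ 0 := by
        intro t ht h0
        exact hω ⟨t, ht, h0⟩
      have key : ∀ n, p (min n m') ≤ U n ω := by
        intro n
        induction n using Nat.strong_induction_on with
        | _ n ih =>
          by_contra hc
          push_neg at hc
          have hage : ageChain m' p U n ω = min n m' :=
            ageChain_eq_min m' p U ω n (fun j hj => ih j hj) n le_rfl
          have : ageChain m' p U (n+1) ω = 0 := by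
            simp only [ageChain, hage, if_pos hc]
          exact hnever (n+1) (by omega) this
      simp only [Set.mem_iInter, Finset.mem_Ico, Set.mem_preimage, Set.mem_Ici]
      intro j hj
      have := key j
      rwa [min_eq_right (by omega)] at this
    have hprob : ∀ k : ℕ,
        ℙ (⋂ j ∈ Finset.Ico m' (m' + k), U j ⁻¹' Set.Ici (p m'))
          = ENNReal.ofReal (1 - p m') ^ k := by
      intro k
      rw [hUindep.measure_inter_preimage_eq_mul (Finset.Ico m' (m' + k))
        (sets := fun _ => Set.Ici (p m')) (fun j _ => measurableSet_Ici)]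
      rw [Finset.prod_congr rfl (fun j _ => prob_Ici U hUmeas hUunif j _ (hp m' le_rfl).1),
        Finset.prod_const, Nat.card_Ico]
      congr 1
      omega
    have hbound : ∀ k : ℕ, ℙ Eᶜ ≤ ENNReal.ofReal (1 - p m') ^ k := by
      intro k
      rw [← hprob k]
      exact measure_mono (hsub k)
    have hr : ENNReal.ofReal (1 - p m') < 1 := by
      rw [← ENNReal.ofReal_one]
      exact ENNReal.ofReal_lt_ofReal_iff_of_nonneg (by linarith [(hp m' le_rfl).2]) |>.mpr
        (by linarith)
    have htend := ENNReal.tendsto_pow_atTop_nhds_zero_of_lt_one hr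
    have hc0 : ℙ Eᶜ = 0 := by
      have := ge_of_tendsto htend (Filter.Eventually.of_forall hbound)
      exact le_antisymm this zero_le
    have h1 : (1 : ℝ≥0∞) ≤ ℙ E := by
      have := measure_union_le (μ := (ℙ : Measure Ω)) E Eᶜ
      rw [Set.union_compl_self, measure_univ, hc0, add_zero] at this
      exact this
    exact le_antisymm prob_le_one h1
end
end

section
/- Suppose m' ≤ ⌊n/m⌋ - 1 and take the transition probabilities p_0 = p_1 = ⋯ = p_{m'-1} = 0 and p_{m'} = 1/(n/m - m') = m/(n - m'·m). Then the first return time X to state 0 of the age Markov chain started at 0 satisfies E[X] = n/m and Var[X] = (n/m - m')·(n/m - (m'+1)). -/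
open MeasureTheory ProbabilityTheory Finset
open scoped ProbabilityTheory ENNReal

noncomputable section

/-- The policy `p_0 = ⋯ = p_{m'-1} = 0`, `p_{m'} = 1/(n/m - m')` for the regime
`m' ≤ ⌊n/m⌋ - 1`. -/
def optPolicyA (n m m' : ℕ) : ℕ → ℝ :=
  fun j => if j < m' then 0 else ((n : ℝ) / m - m')⁻¹

section basic
variable {Ω : Type*} [MeasurableSpace Ω] {m' : ℕ} {p : ℕ → ℝ} {U : ℕ → Ω → ℝ}

lemma measurable_ageChain (hU : ∀ t, Measurable (U t)) (t : ℕ) :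
    Measurable (ageChain m' p U t) := by
  induction t with
  | zero => exact measurable_const
  | succ t ih =>
    have hC : MeasurableSet {ω | U t ω < p (ageChain m' p U t ω)} := by
      have : {ω | U t ω < p (ageChain m' p U t ω)} =
          ⋃ j : ℕ, ({ω | ageChain m' p U t ω = j} ∩ {ω | U t ω < p j}) := by
        ext ω; simp only [Set.mem_setOf_eq, Set.mem_iUnion, Set.mem_inter_iff]
        exact ⟨fun h => ⟨_, rfl, h⟩, fun ⟨j, hj, h⟩ => hj ▸ h⟩
      rw [this]
      exact MeasurableSet.iUnion fun j =>
        (ih (measurableSet_singleton j)).inter ((hU t) measurableSet_Iio)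
    exact Measurable.ite hC measurable_const
      ((measurable_from_top (f := fun x : ℕ => min (x + 1) m')).comp ih)

lemma nat_sInf_eq_iff {S : Set ℕ} {k : ℕ} :
    sInf S = k ↔ (k ∈ S ∧ ∀ j < k, j ∉ S) ∨ (k = 0 ∧ ∀ j, j ∉ S) := by
  constructor
  · rintro rfl
    rcases Set.eq_empty_or_nonempty S with h | h
    · exact Or.inr ⟨by simp [h], by simp [h]⟩
    · exact Or.inl ⟨Nat.sInf_mem h, fun j hj => Nat.notMem_of_lt_sInf hj⟩
  · rintro (⟨hk, hlt⟩ | ⟨rfl, hall⟩)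
    · exact le_antisymm (Nat.sInf_le hk) (by
        by_contra h
        push_neg at h
        exact hlt _ h (Nat.sInf_mem ⟨k, hk⟩))
    · have : S = ∅ := Set.eq_empty_iff_forall_notMem.2 hall
      simp [this]

lemma measurable_firstReturn (hU : ∀ t, Measurable (U t)) :
    Measurable (firstReturn m' p U) := by
  apply measurable_to_countable'
  intro k
  have hAt : ∀ t : ℕ, MeasurableSet {ω | 1 ≤ t ∧ ageChain m' p U t ω = 0} := by
    intro t
    rcases Nat.eq_zero_or_pos t with rfl | ht
    · simp
    · have h1t : 1 ≤ t := ht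
      have : {ω | 1 ≤ t ∧ ageChain m' p U t ω = 0} = {ω | ageChain m' p U t ω = 0} := by
        ext ω; simp [h1t]
      rw [this]
      exact measurable_ageChain hU t (measurableSet_singleton 0)
  have hpre : firstReturn m' p U ⁻¹' {k} = {ω | firstReturn m' p U ω = k} := rfl
  rcases Nat.eq_zero_or_pos k with rfl | hk
  · have : {ω | firstReturn m' p U ω = 0} =
        ({ω | 1 ≤ 0 ∧ ageChain m' p U 0 ω = 0}) ∪
        (⋂ j : ℕ, {ω | 1 ≤ j ∧ ageChain m' p U j ω = 0}ᶜ) := by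
      ext ω
      simp only [Set.mem_setOf_eq, firstReturn, nat_sInf_eq_iff, Set.mem_union,
        Set.mem_iInter, Set.mem_compl_iff]
      constructor
      · rintro (⟨h1, _⟩ | ⟨_, h⟩)
        · omega
        · exact Or.inr fun j => h j
      · rintro (⟨h1, _⟩ | h)
        · omega
        · exact Or.inr ⟨by simp, fun j => h j⟩
    rw [hpre, this]
    exact (hAt 0).union (MeasurableSet.iInter fun j => (hAt j).compl)
  · have : {ω | firstReturn m' p U ω = k} =
        ({ω | 1 ≤ k ∧ ageChain m' p U k ω = 0} ∩
          ⋂ j ∈ Finset.range k, {ω | 1 ≤ j ∧ ageChain m' p U j ω = 0}ᶜ) := by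
      ext ω
      simp only [Set.mem_setOf_eq, firstReturn, nat_sInf_eq_iff, Set.mem_inter_iff,
        Set.mem_iInter, Set.mem_compl_iff, Finset.mem_range]
      constructor
      · rintro (⟨h1, h2⟩ | ⟨h0, _⟩)
        · exact ⟨h1, fun j hj => h2 j hj⟩
        · omega
      · rintro ⟨h1, h2⟩
        exact Or.inl ⟨h1, fun j hj => h2 j hj⟩
    rw [hpre, this]
    exact (hAt k).inter (MeasurableSet.biInter (Set.to_countable _) fun j _ => (hAt j).compl)

section pointwise
omit [MeasurableSpace Ω]
variable {q : ℝ} {ω : Ω}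

lemma age_eq_of_le (hS : ∀ s, 0 ≤ U s ω) (hp0 : ∀ j < m', p j = 0) :
    ∀ t, t ≤ m' → ageChain m' p U t ω = t := by
  intro t ht
  induction t with
  | zero => rfl
  | succ t ih =>
    have ht' : t ≤ m' := Nat.le_of_succ_le ht
    have htm : t < m' := ht
    show (if U t ω < p (ageChain m' p U t ω) then 0 else min (ageChain m' p U t ω + 1) m') = t + 1
    rw [ih ht', hp0 t htm, if_neg (not_lt.2 (hS t)), min_eq_left ht]

lemma age_stay (hS : ∀ s, 0 ≤ U s ω) (hp0 : ∀ j < m', p j = 0) (hpm : p m' = q) :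
    ∀ k, (∀ j < k, ¬ U (m' + j) ω < q) → ageChain m' p U (m' + k) ω = m' := by
  intro k hk
  induction k with
  | zero => exact age_eq_of_le hS hp0 m' le_rfl
  | succ k ih =>
    have h1 : ageChain m' p U (m' + k) ω = m' := ih fun j hj => hk j (Nat.lt_succ_of_lt hj)
    show (if U (m' + k) ω < p (ageChain m' p U (m' + k) ω) then 0
        else min (ageChain m' p U (m' + k) ω + 1) m') = m'
    rw [h1, hpm, if_neg (hk k (Nat.lt_succ_self k)), min_eq_right (Nat.le_succ m')]

lemma age_ne_zero (hS : ∀ s, 0 ≤ U s ω) (hp0 : ∀ j < m', p j = 0) (hpm : p m' = q)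
    (hm' : 1 ≤ m') {k : ℕ} (hk : ∀ j < k, ¬ U (m' + j) ω < q) :
    ∀ t, 1 ≤ t → t ≤ m' + k → ageChain m' p U t ω ≠ 0 := by
  intro t h1 h2
  rcases le_or_gt t m' with h | h
  · rw [age_eq_of_le hS hp0 t h]; omega
  · obtain ⟨j, rfl, hj⟩ : ∃ j, t = m' + j ∧ j ≤ k := ⟨t - m', by omega, by omega⟩
    rw [age_stay hS hp0 hpm j fun i hi => hk i (lt_of_lt_of_le hi hj)]
    omega

lemma firstReturn_eq (hS : ∀ s, 0 ≤ U s ω) (hp0 : ∀ j < m', p j = 0) (hpm : p m' = q)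
    (hm' : 1 ≤ m') {s : ℕ} (hs : U (m' + s) ω < q) (hmin : ∀ j < s, ¬ U (m' + j) ω < q) :
    firstReturn m' p U ω = m' + s + 1 := by
  have hmem : m' + s + 1 ∈ {t | 1 ≤ t ∧ ageChain m' p U t ω = 0} := by
    constructor
    · omega
    · show (if U (m' + s) ω < p (ageChain m' p U (m' + s) ω) then 0
          else min (ageChain m' p U (m' + s) ω + 1) m') = 0
      rw [age_stay hS hp0 hpm s hmin, hpm, if_pos hs]
  refine le_antisymm (Nat.sInf_le hmem) ?_
  by_contra h
  push_neg at h
  have hmem' := Nat.sInf_mem (⟨_, hmem⟩ : {t | 1 ≤ t ∧ ageChain m' p U t ω = 0}.Nonempty)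
  have hdef : sInf {t | 1 ≤ t ∧ ageChain m' p U t ω = 0} = firstReturn m' p U ω := rfl
  rw [hdef] at hmem'
  obtain ⟨h1, h2⟩ := hmem'
  exact age_ne_zero hS hp0 hpm hm' (k := s) hmin _ h1 (by omega) h2

lemma firstReturn_gt_iff (hS : ∀ s, 0 ≤ U s ω) (hp0 : ∀ j < m', p j = 0) (hpm : p m' = q)
    (hm' : 1 ≤ m') (hT : ∃ s, U (m' + s) ω < q) (k : ℕ) :
    m' + k < firstReturn m' p U ω ↔ ∀ j < k, ¬ U (m' + j) ω < q := by
  classical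
  obtain ⟨s, hs, hmin⟩ : ∃ s, U (m' + s) ω < q ∧ ∀ j < s, ¬ U (m' + j) ω < q :=
    ⟨Nat.find hT, Nat.find_spec hT, fun j hj => Nat.find_min hT hj⟩
  rw [firstReturn_eq hS hp0 hpm hm' hs hmin]
  constructor
  · intro h j hj
    exact hmin j (by omega)
  · intro h
    have : k ≤ s := by
      by_contra hc
      push_neg at hc
      exact h s hc hs
    omega

lemma firstReturn_gt_of_le (hS : ∀ s, 0 ≤ U s ω) (hp0 : ∀ j < m', p j = 0) (hpm : p m' = q)
    (hm' : 1 ≤ m') (hT : ∃ s, U (m' + s) ω < q) {t : ℕ} (ht : t ≤ m') :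
    t < firstReturn m' p U ω := by
  have := (firstReturn_gt_iff hS hp0 hpm hm' hT 0).2 (by omega)
  omega

end pointwise

end basic

section measure
variable {Ω : Type*} [MeasureSpace Ω] [IsProbabilityMeasure (ℙ : Measure Ω)]
variable {U : ℕ → Ω → ℝ} {q : ℝ}

lemma meas_Iio_zero (hUmeas : ∀ t, Measurable (U t))
    (hUunif : ∀ t, Measure.map (U t) ℙ = volume.restrict (Set.Icc (0 : ℝ) 1)) (t : ℕ) :
    ℙ (U t ⁻¹' Set.Iio 0) = 0 := by
  rw [← Measure.map_apply (hUmeas t) measurableSet_Iio, hUunif t,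
    Measure.restrict_apply measurableSet_Iio]
  have : Set.Iio (0:ℝ) ∩ Set.Icc (0:ℝ) 1 = ∅ := by
    rw [Set.eq_empty_iff_forall_notMem]
    rintro x ⟨h1, h2, _⟩
    simp only [Set.mem_Iio] at h1
    linarith
  rw [this, measure_empty]

lemma meas_Ici (hUmeas : ∀ t, Measurable (U t))
    (hUunif : ∀ t, Measure.map (U t) ℙ = volume.restrict (Set.Icc (0 : ℝ) 1))
    (hq0 : 0 ≤ q) (t : ℕ) :
    ℙ (U t ⁻¹' Set.Ici q) = ENNReal.ofReal (1 - q) := by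
  rw [← Measure.map_apply (hUmeas t) measurableSet_Ici, hUunif t,
    Measure.restrict_apply measurableSet_Ici]
  have : Set.Ici q ∩ Set.Icc (0:ℝ) 1 = Set.Icc q 1 := by
    ext x; simp only [Set.mem_inter_iff, Set.mem_Ici, Set.mem_Icc]
    constructor
    · rintro ⟨h1, _, h3⟩; exact ⟨h1, h3⟩
    · rintro ⟨h1, h2⟩; exact ⟨h1, le_trans hq0 h1, h2⟩
  rw [this, Real.volume_Icc]

lemma meas_inter_Ici (hUmeas : ∀ t, Measurable (U t))
    (hUindep : iIndepFun U ℙ)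
    (hUunif : ∀ t, Measure.map (U t) ℙ = volume.restrict (Set.Icc (0 : ℝ) 1))
    (hq0 : 0 ≤ q) (m' k : ℕ) :
    ℙ (⋂ j ∈ Finset.range k, U (m' + j) ⁻¹' Set.Ici q) = ENNReal.ofReal (1 - q) ^ k := by
  classical
  have hinj : Function.Injective (fun j : ℕ => m' + j) := fun a b h => Nat.add_left_cancel h
  have h := hUindep.measure_inter_preimage_eq_mul
    ((Finset.range k).image (fun j => m' + j)) (sets := fun _ => Set.Ici q)
    (fun i _ => measurableSet_Ici)
  have hset : (⋂ i ∈ (Finset.range k).image (fun j => m' + j), U i ⁻¹' Set.Ici q)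
      = ⋂ j ∈ Finset.range k, U (m' + j) ⁻¹' Set.Ici q := by
    ext ω
    simp only [Set.mem_iInter, Finset.mem_image, Finset.mem_range]
    constructor
    · intro h j hj; exact h _ ⟨j, hj, rfl⟩
    · rintro h i ⟨j, hj, rfl⟩; exact h j hj
  rw [hset] at h
  rw [h, Finset.prod_image (fun a _ b _ hab => hinj hab)]
  simp only [meas_Ici hUmeas hUunif hq0]
  rw [Finset.prod_const, Finset.card_range]

lemma meas_good (hUmeas : ∀ t, Measurable (U t))
    (hUunif : ∀ t, Measure.map (U t) ℙ = volume.restrict (Set.Icc (0 : ℝ) 1)) :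
    ℙ {ω | ∀ s, 0 ≤ U s ω}ᶜ = 0 := by
  have : {ω | ∀ s, 0 ≤ U s ω}ᶜ = ⋃ s, U s ⁻¹' Set.Iio 0 := by
    ext ω; simp [not_le]
  rw [this]
  refine le_antisymm (le_trans (measure_iUnion_le _) ?_) zero_le
  simp [meas_Iio_zero hUmeas hUunif]

lemma meas_hit (hUmeas : ∀ t, Measurable (U t))
    (hUindep : iIndepFun U ℙ)
    (hUunif : ∀ t, Measure.map (U t) ℙ = volume.restrict (Set.Icc (0 : ℝ) 1))
    (hq0 : 0 < q) (hq1 : q ≤ 1) (m' : ℕ) :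
    ℙ {ω | ∃ s, U (m' + s) ω < q}ᶜ = 0 := by
  have hr1 : ENNReal.ofReal (1 - q) < 1 := by
    rw [← ENNReal.ofReal_one]
    exact ENNReal.ofReal_lt_ofReal_iff_of_nonneg (by linarith) |>.2 (by linarith)
  have hsub : ∀ k, ℙ {ω | ∃ s, U (m' + s) ω < q}ᶜ ≤ ENNReal.ofReal (1 - q) ^ k := by
    intro k
    rw [← meas_inter_Ici hUmeas hUindep hUunif hq0.le m' k]
    apply measure_mono
    intro ω hω
    simp only [Set.mem_compl_iff, Set.mem_setOf_eq, not_exists, not_lt] at hω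
    simp only [Set.mem_iInter]
    intro j _
    exact hω j
  have htend := ENNReal.tendsto_pow_atTop_nhds_zero_of_lt_one hr1
  exact le_antisymm (ge_of_tendsto' htend hsub) zero_le

end measure


section integration
variable {Ω : Type*} [MeasureSpace Ω] [IsProbabilityMeasure (ℙ : Measure Ω)]

lemma sum_range_integral {X : Ω → ℕ} (hX : Measurable X) {w : ℕ → ℝ} (hw : ∀ t, 0 ≤ w t)
    (hsum : Summable (fun t => w t * (ℙ {ω | t < X ω}).toReal)) :
    Integrable (fun ω => ∑ t ∈ Finset.range (X ω), w t) (ℙ : Measure Ω) ∧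
    ∫ ω, (∑ t ∈ Finset.range (X ω), w t) ∂ℙ
      = ∑' t, w t * (ℙ {ω | t < X ω}).toReal := by
  set E : ℕ → Set Ω := fun t => {ω | t < X ω} with hE
  have hEmeas : ∀ t, MeasurableSet (E t) := fun t => hX measurableSet_Ioi
  set g : ℕ → Ω → ℝ := fun t => (E t).indicator (fun _ => w t) with hg
  have hgmeas : ∀ t, Measurable (g t) := fun t => measurable_const.indicator (hEmeas t)
  have hgz : ∀ ω t, X ω ≤ t → g t ω = 0 := by
    intro ω t ht
    have hne : ω ∉ E t := by simp [hE, not_lt.2 ht]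
    simp [hg, Set.indicator_apply, hne]
  have hgv : ∀ ω t, t < X ω → g t ω = w t := by
    intro ω t ht
    have hme : ω ∈ E t := ht
    simp [hg, Set.indicator_apply, hme]
  have htsum_eq : ∀ ω, ∑' t, g t ω = ∑ t ∈ Finset.range (X ω), w t := by
    intro ω
    rw [tsum_eq_sum (s := Finset.range (X ω))
      (fun t ht => hgz ω t (by simpa using Finset.mem_range.not.1 ht))]
    refine Finset.sum_congr rfl fun t ht => hgv ω t (Finset.mem_range.1 ht)
  have hnorm : ∀ t ω, (‖g t ω‖₊ : ℝ≥0∞) = ENNReal.ofReal (g t ω) := by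
    intro t ω
    rcases le_or_gt (X ω) t with h | h
    · simp [hgz ω t h]
    · rw [hgv ω t h]; exact Real.enorm_eq_ofReal (hw t)
  have hlint : ∀ t, ∫⁻ ω, ‖g t ω‖₊ ∂ℙ = ENNReal.ofReal (w t * (ℙ (E t)).toReal) := by
    intro t
    simp only [hnorm]
    have : (fun ω => ENNReal.ofReal (g t ω))
        = (E t).indicator (fun _ => ENNReal.ofReal (w t)) := by
      ext ω
      rcases le_or_gt (X ω) t with h | h
      · have hne : ω ∉ E t := by simp [hE, not_lt.2 h]
        simp [hgz ω t h, Set.indicator_apply, hne]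
      · have hme : ω ∈ E t := h
        simp [hgv ω t h, Set.indicator_apply, hme]
    rw [this, lintegral_indicator_const (hEmeas t),
      ENNReal.ofReal_mul (hw t), ENNReal.ofReal_toReal (measure_ne_top _ _)]
  have hptnn : ∀ t, 0 ≤ w t * (ℙ (E t)).toReal :=
    fun t => mul_nonneg (hw t) ENNReal.toReal_nonneg
  have htot : ∑' t, ∫⁻ ω, ‖g t ω‖₊ ∂ℙ
      = ENNReal.ofReal (∑' t, w t * (ℙ (E t)).toReal) := by
    simp only [hlint]
    exact (ENNReal.ofReal_tsum_of_nonneg hptnn hsum).symm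
  have htot_ne : ∑' t, ∫⁻ ω, ‖g t ω‖₊ ∂ℙ ≠ ∞ := by
    rw [htot]; exact ENNReal.ofReal_ne_top
  have hFmeas : Measurable (fun ω => ∑ t ∈ Finset.range (X ω), w t) :=
    (measurable_from_top (f := fun N => ∑ t ∈ Finset.range N, w t)).comp hX
  have hFnonneg : ∀ ω, 0 ≤ ∑ t ∈ Finset.range (X ω), w t :=
    fun ω => Finset.sum_nonneg fun t _ => hw t
  constructor
  · refine ⟨hFmeas.aestronglyMeasurable, ?_⟩
    rw [hasFiniteIntegral_iff_ofReal (Filter.Eventually.of_forall hFnonneg)]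
    have hofe : ∀ ω, ENNReal.ofReal (∑ t ∈ Finset.range (X ω), w t)
        = ∑' t, ENNReal.ofReal (g t ω) := by
      intro ω
      rw [tsum_eq_sum (s := Finset.range (X ω))
        (fun t ht => by simp [hgz ω t (by simpa using Finset.mem_range.not.1 ht)]),
        ENNReal.ofReal_sum_of_nonneg (fun t _ => hw t)]
      refine Finset.sum_congr rfl fun t ht => by rw [hgv ω t (Finset.mem_range.1 ht)]
    calc ∫⁻ ω, ENNReal.ofReal (∑ t ∈ Finset.range (X ω), w t) ∂ℙ
        = ∫⁻ ω, ∑' t, ENNReal.ofReal (g t ω) ∂ℙ := by simp only [hofe]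
      _ = ∑' t, ∫⁻ ω, ENNReal.ofReal (g t ω) ∂ℙ :=
          lintegral_tsum fun t => ((hgmeas t).ennreal_ofReal).aemeasurable
      _ < ∞ := by
          have : ∀ t, ∫⁻ ω, ENNReal.ofReal (g t ω) ∂ℙ = ∫⁻ ω, ‖g t ω‖₊ ∂ℙ := by
            intro t; simp only [hnorm]
          simp only [this]
          exact lt_of_le_of_ne le_top htot_ne
  · calc ∫ ω, (∑ t ∈ Finset.range (X ω), w t) ∂ℙ
        = ∫ ω, ∑' t, g t ω ∂ℙ := by
          refine integral_congr_ae (Filter.Eventually.of_forall fun ω => (htsum_eq ω).symm)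
      _ = ∑' t, ∫ ω, g t ω ∂ℙ :=
          integral_tsum (fun t => (hgmeas t).aestronglyMeasurable) htot_ne
      _ = ∑' t, w t * (ℙ (E t)).toReal := by
          refine tsum_congr fun t => ?_
          rw [hg]
          rw [integral_indicator_const _ (hEmeas t), smul_eq_mul, mul_comm, Measure.real_def]

end integration

lemma sum_range_two_mul_add_one (N : ℕ) :
    ∑ t ∈ Finset.range N, (2 * (t : ℝ) + 1) = (N : ℝ) ^ 2 := by
  induction N with
  | zero => simp
  | succ N ih =>
    rw [Finset.sum_range_succ, ih]
    push_cast
    ring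


/-- With `m' ≤ ⌊n/m⌋ - 1` and the policy `p_0 = ⋯ = p_{m'-1} = 0`,
`p_{m'} = 1/(n/m - m')`, the first return time `X` to state `0` satisfies
`E[X] = n/m` and `Var[X] = (n/m - m')(n/m - (m'+1))`. -/
theorem firstReturn_optPolicyA_mean_variance
    {Ω : Type*} [MeasureSpace Ω] [IsProbabilityMeasure (ℙ : Measure Ω)]
    (n m m' : ℕ) (hm : 0 < m) (hmn : m < n) (hm' : 1 ≤ m') (hm'le : m' ≤ n / m - 1)
    (U : ℕ → Ω → ℝ) (hUmeas : ∀ t, Measurable (U t))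
    (hUindep : iIndepFun U ℙ)
    (hUunif : ∀ t, Measure.map (U t) ℙ = volume.restrict (Set.Icc (0 : ℝ) 1)) :
    (∫ ω, (firstReturn m' (optPolicyA n m m') U ω : ℝ) ∂ℙ = (n : ℝ) / m) ∧
    variance (fun ω => (firstReturn m' (optPolicyA n m m') U ω : ℝ)) ℙ
      = ((n : ℝ) / m - m') * ((n : ℝ) / m - (m' + 1)) := by
  -- arithmetic setup
  set c : ℝ := (n : ℝ) / m - m' with hcdef
  have hm0 : (0 : ℝ) < m := by exact_mod_cast hm
  have hdiv : m' + 1 ≤ n / m := by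
    have h1 : 1 ≤ n / m := (Nat.one_le_div_iff hm).2 hmn.le
    omega
  have hmul : (m' + 1) * m ≤ n := (Nat.le_div_iff_mul_le hm).1 hdiv
  have hmulR : ((m' : ℝ) + 1) * m ≤ n := by exact_mod_cast hmul
  have hc1 : 1 ≤ c := by
    have : (m' : ℝ) + 1 ≤ (n : ℝ) / m := (le_div_iff₀ hm0).2 hmulR
    rw [hcdef]; linarith
  have hc0 : (0 : ℝ) < c := by linarith
  set q : ℝ := c⁻¹ with hqdef
  have hq0 : 0 < q := inv_pos.2 hc0
  have hq1 : q ≤ 1 := by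
    rw [hqdef]
    exact inv_le_one_of_one_le₀ hc1
  set r : ℝ := 1 - q with hrdef
  have hr0 : 0 ≤ r := by rw [hrdef]; linarith
  have hr1 : r < 1 := by rw [hrdef]; linarith
  have h1r : 1 - r = q := by rw [hrdef]; ring
  set P : ℕ → ℝ := optPolicyA n m m' with hPdef
  have hp0 : ∀ j < m', P j = 0 := by
    intro j hj
    rw [hPdef]
    show (if j < m' then (0:ℝ) else ((n : ℝ) / m - m')⁻¹) = 0
    rw [if_pos hj]
  have hpm : P m' = q := by
    rw [hPdef]
    show (if m' < m' then (0:ℝ) else ((n : ℝ) / m - m')⁻¹) = q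
    rw [if_neg (lt_irrefl m'), hqdef, hcdef]
  set X : Ω → ℕ := firstReturn m' P U with hXdef
  have hXmeas : Measurable X := measurable_firstReturn hUmeas
  -- null sets and a.e. statement
  have hSnull : ℙ {ω | ∀ s, 0 ≤ U s ω}ᶜ = 0 := meas_good hUmeas hUunif
  have hTnull : ℙ {ω | ∃ s, U (m' + s) ω < q}ᶜ = 0 :=
    meas_hit hUmeas hUindep hUunif hq0 hq1 m'
  have hae : ∀ᵐ ω ∂(ℙ : Measure Ω), (∀ s, 0 ≤ U s ω) ∧ (∃ s, U (m' + s) ω < q) := by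
    have h1 : ∀ᵐ ω ∂(ℙ : Measure Ω), (∀ s, 0 ≤ U s ω) := by
      rw [ae_iff]
      simpa [Set.compl_setOf] using hSnull
    have h2 : ∀ᵐ ω ∂(ℙ : Measure Ω), (∃ s, U (m' + s) ω < q) := by
      rw [ae_iff]
      simpa [Set.compl_setOf] using hTnull
    exact h1.and h2
  -- event probabilities
  have hpt1 : ∀ t, t ≤ m' → ℙ {ω | t < X ω} = 1 := by
    intro t ht
    have hEq : {ω | t < X ω} = X ⁻¹' Set.Ioi t := rfl
    rw [hEq, ← prob_compl_eq_zero_iff (hXmeas measurableSet_Ioi)]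
    have hsub : (X ⁻¹' Set.Ioi t)ᶜ ⊆
        {ω | ∀ s, 0 ≤ U s ω}ᶜ ∪ {ω | ∃ s, U (m' + s) ω < q}ᶜ := by
      intro ω hω
      by_contra hc
      simp only [Set.mem_union, Set.mem_compl_iff, Set.mem_setOf_eq, not_or, not_not] at hc
      exact hω (firstReturn_gt_of_le hc.1 hp0 hpm hm' hc.2 ht)
    refine le_antisymm (le_trans (measure_mono hsub) ?_) zero_le
    calc ℙ _ ≤ ℙ {ω | ∀ s, 0 ≤ U s ω}ᶜ + ℙ {ω | ∃ s, U (m' + s) ω < q}ᶜ :=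
          measure_union_le _ _
      _ = 0 := by rw [hSnull, hTnull, add_zero]
  have hpt2 : ∀ k, ℙ {ω | m' + k < X ω} = ENNReal.ofReal r ^ k := by
    intro k
    have hEB : {ω | m' + k < X ω} =ᵐ[(ℙ : Measure Ω)]
        (⋂ j ∈ Finset.range k, U (m' + j) ⁻¹' Set.Ici q) := by
      filter_upwards [hae] with ω hω
      rw [eq_iff_iff]
      show (m' + k < X ω) ↔ ω ∈ ⋂ j ∈ Finset.range k, U (m' + j) ⁻¹' Set.Ici q
      rw [firstReturn_gt_iff hω.1 hp0 hpm hm' hω.2 k]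
      simp only [Set.mem_iInter, Set.mem_preimage, Set.mem_Ici, Finset.mem_range]
      constructor
      · intro h j hj; exact not_lt.1 (h j hj)
      · intro h j hj; exact not_lt.2 (h j hj)
    rw [measure_congr hEB, meas_inter_Ici hUmeas hUindep hUunif hq0.le m' k, hrdef]
  have hptR1 : ∀ t, t ≤ m' → (ℙ {ω | t < X ω}).toReal = 1 := by
    intro t ht; rw [hpt1 t ht, ENNReal.toReal_one]
  have hptR2 : ∀ k, (ℙ {ω | m' + k < X ω}).toReal = r ^ k := by
    intro k
    rw [hpt2 k, ← ENNReal.ofReal_pow hr0, ENNReal.toReal_ofReal (pow_nonneg hr0 k)]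
  -- summability
  have hgeom : Summable (fun k : ℕ => r ^ k) := summable_geometric_of_lt_one hr0 hr1
  have hkgeom : Summable (fun k : ℕ => (k : ℝ) * r ^ k) := by
    have := summable_pow_mul_geometric_of_norm_lt_one (R := ℝ) 1
      (by rwa [Real.norm_eq_abs, abs_of_nonneg hr0])
    simpa [pow_one] using this
  have hptshift : (fun k : ℕ => (ℙ {ω | k + m' < X ω}).toReal) = fun k : ℕ => r ^ k := by
    funext k
    rw [add_comm k m']
    exact hptR2 k
  have hsumpt : Summable (fun t : ℕ => (ℙ {ω | t < X ω}).toReal) :=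
    (summable_nat_add_iff m').1 (by rw [hptshift]; exact hgeom)
  -- mean
  obtain ⟨hint1, hval1⟩ := sum_range_integral (w := fun _ => (1:ℝ)) hXmeas
    (fun _ => zero_le_one) (by simpa using hsumpt)
  have hXcast : (fun ω => ∑ t ∈ Finset.range (X ω), (1:ℝ)) = fun ω => (X ω : ℝ) := by
    funext ω; simp
  have hmean : ∫ ω, (X ω : ℝ) ∂ℙ = (m' : ℝ) + c := by
    rw [← hXcast, hval1]
    have hs : (fun t : ℕ => (1:ℝ) * (ℙ {ω | t < X ω}).toReal)
        = fun t : ℕ => (ℙ {ω | t < X ω}).toReal := funext fun t => one_mul _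
    rw [show (∑' t, (1:ℝ) * (ℙ {ω | t < X ω}).toReal)
        = ∑' t : ℕ, (ℙ {ω | t < X ω}).toReal from by rw [hs],
      ← Summable.sum_add_tsum_nat_add m' hsumpt]
    have h1 : ∑ i ∈ Finset.range m', (ℙ {ω | i < X ω}).toReal = (m' : ℝ) := by
      rw [Finset.sum_congr rfl fun i hi => hptR1 i (Nat.le_of_lt (Finset.mem_range.1 hi))]
      simp
    have h2 : ∑' i : ℕ, (ℙ {ω | i + m' < X ω}).toReal = c := by
      rw [hptshift, tsum_geometric_of_lt_one hr0 hr1, h1r, hqdef, inv_inv]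
    rw [h1, h2]
  -- second moment
  set w2 : ℕ → ℝ := fun t => 2 * (t : ℝ) + 1 with hw2def
  have hw2 : ∀ t, 0 ≤ w2 t := fun t => by rw [hw2def]; positivity
  have hshift2 : (fun k : ℕ => w2 (k + m') * (ℙ {ω | k + m' < X ω}).toReal)
      = fun k : ℕ => ((2 * (m' : ℝ) + 1) * r ^ k + 2 * ((k : ℝ) * r ^ k)) := by
    funext k
    have hk := congrFun hptshift k
    rw [hw2def]
    simp only
    rw [hk]
    push_cast
    ring
  have hsum2 : Summable (fun t => w2 t * (ℙ {ω | t < X ω}).toReal) := by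
    refine (summable_nat_add_iff m').1 ?_
    rw [hshift2]
    exact (hgeom.mul_left _).add (hkgeom.mul_left 2)
  obtain ⟨hint2, hval2⟩ := sum_range_integral hXmeas hw2 hsum2
  have hXsq : (fun ω => ∑ t ∈ Finset.range (X ω), w2 t) = fun ω => (X ω : ℝ) ^ 2 := by
    funext ω
    rw [hw2def]
    exact sum_range_two_mul_add_one (X ω)
  have hrc : r * c ^ 2 = c ^ 2 - c := by
    rw [hrdef, hqdef]
    field_simp
  have hsecond : ∫ ω, (X ω : ℝ) ^ 2 ∂ℙ
      = (m' : ℝ) ^ 2 + ((2 * m' + 1) * c + 2 * (c ^ 2 - c)) := by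
    rw [← hXsq, hval2, ← Summable.sum_add_tsum_nat_add m' hsum2]
    have h1 : ∑ i ∈ Finset.range m', w2 i * (ℙ {ω | i < X ω}).toReal = (m' : ℝ) ^ 2 := by
      have hcongr : ∀ i ∈ Finset.range m', w2 i * (ℙ {ω | i < X ω}).toReal = 2 * (i : ℝ) + 1 := by
        intro i hi
        rw [hptR1 i (Nat.le_of_lt (Finset.mem_range.1 hi)), mul_one]
      rw [Finset.sum_congr rfl hcongr]
      exact sum_range_two_mul_add_one m'
    have h2 : ∑' i : ℕ, w2 (i + m') * (ℙ {ω | i + m' < X ω}).toReal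
        = (2 * m' + 1) * c + 2 * (c ^ 2 - c) := by
      rw [hshift2, Summable.tsum_add (hgeom.mul_left _) (hkgeom.mul_left 2),
        tsum_mul_left, tsum_mul_left, tsum_geometric_of_lt_one hr0 hr1,
        tsum_coe_mul_geometric_of_norm_lt_one (by rwa [Real.norm_eq_abs, abs_of_nonneg hr0]),
        h1r, hqdef, inv_inv]
      have hdiv2 : r / (c⁻¹) ^ 2 = c ^ 2 - c := by
        rw [← hqdef, ← hrc]
        rw [hqdef]
        field_simp
      rw [hdiv2]
    rw [h1, h2]
  -- conclusion
  have hnm : (n : ℝ) / m = (m' : ℝ) + c := by rw [hcdef]; ring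
  have hint2' : Integrable (fun ω => (X ω : ℝ) ^ 2) (ℙ : Measure Ω) := by
    rw [← hXsq]; exact hint2
  have hXr : Measurable (fun ω => (X ω : ℝ)) := measurable_from_top.comp hXmeas
  have hmem2 : MemLp (fun ω => (X ω : ℝ)) 2 (ℙ : Measure Ω) :=
    (memLp_two_iff_integrable_sq hXr.aestronglyMeasurable).2 hint2'
  constructor
  · rw [hmean, hnm]
  · rw [variance_eq_sub hmem2]
    have hpow : ∫ ω, ((fun ω => (X ω : ℝ)) ^ 2) ω ∂ℙ = ∫ ω, (X ω : ℝ) ^ 2 ∂ℙ := by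
      refine integral_congr_ae (Filter.Eventually.of_forall fun ω => ?_)
      simp [pow_two]
    rw [hpow, hsecond, hmean, hnm]
    ring
end
end

section
/- Let S be a random subset of {1,…,n} with |S| = m almost surely, and let ω_1, …, ω_n be nonnegative random weights with ω_i = 0 for i ∉ S and ∑_{i∈S} ω_i = 1 almost surely; set Σ = ∑_{i=1}^n Var[ω_i]. Let d_1, …, d_n be random vectors in a real inner product space, independent of (S, ω), with E[‖d_i‖²] ≤ G² for all i. Let K ≥ 1 be an integer and let η, η' > 0 be reals with η' ≤ 2η. Then (1/m)·E[∑_{k∈S} ‖η'·K·∑_{i∈S} ω_i (d_i - d_k)‖²] ≤ 16 G² η² K² m (Σ + 1). -/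
open MeasureTheory ProbabilityTheory Finset
open scoped ProbabilityTheory

noncomputable instance {n : ℕ} : MeasurableSpace (Finset (Fin n)) := ⊤

/-- Lemma 3 of the paper: if `S` is a random `m`-element subset of `{1,…,n}`
carrying nonnegative random weights `ω_i` supported on `S` with
`∑_{i∈S} ω_i = 1`, `Σ = ∑ᵢ Var[ω_i]`, and `d_1, …, d_n` are random vectors
independent of `(S, ω)` with `E[‖d_i‖²] ≤ G²`, then for an integer `K ≥ 1` and
reals `0 < η' ≤ 2η`,
`(1/m) E[∑_{k∈S} ‖η' K ∑_{i∈S} ω_i (d_i - d_k)‖²] ≤ 16 G² η² K² m (Σ + 1)`. -/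
theorem expected_discrepancy_bound
    {Ω : Type*} [MeasureSpace Ω] [IsProbabilityMeasure (ℙ : Measure Ω)]
    {E : Type*} [NormedAddCommGroup E] [InnerProductSpace ℝ E]
    [MeasurableSpace E] [BorelSpace E]
    (n m : ℕ) (S : Ω → Finset (Fin n)) (hSmeas : Measurable S)
    (hScard : ∀ᵐ ω ∂ℙ, (S ω).card = m)
    (w : Fin n → Ω → ℝ) (hw0 : ∀ i ω, 0 ≤ w i ω)
    (hwL2 : ∀ i, MemLp (w i) 2 ℙ)
    (hsupp : ∀ᵐ ω ∂ℙ, ∀ i ∉ S ω, w i ω = 0)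
    (hnorm : ∀ᵐ ω ∂ℙ, ∑ i ∈ S ω, w i ω = 1)
    (d : Fin n → Ω → E) (hdL2 : ∀ i, MemLp (d i) 2 ℙ)
    (hindep : IndepFun (fun ω => (S ω, fun i => w i ω)) (fun ω i => d i ω) ℙ)
    (G : ℝ) (hG : ∀ i, ∫ ω, ‖d i ω‖ ^ 2 ∂ℙ ≤ G ^ 2)
    (K : ℕ) (hK : 1 ≤ K) (η η' : ℝ) (hη : 0 < η) (hη' : 0 < η') (hη'le : η' ≤ 2 * η) :
    (1 / (m : ℝ)) * ∫ ω, ∑ k ∈ S ω,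
        ‖(η' * (K : ℝ)) • ∑ i ∈ S ω, w i ω • (d i ω - d k ω)‖ ^ 2 ∂ℙ
      ≤ 16 * G ^ 2 * η ^ 2 * (K : ℝ) ^ 2 * m * ((∑ i, variance (w i) ℙ) + 1) := by
  classical
  rcases Nat.eq_zero_or_pos m with hm | hm
  · subst hm; simp
  -- m ≥ 1, so n ≥ 1 and G^2 ≥ 0
  have hGsq : 0 ≤ G ^ 2 := by
    obtain ⟨ω₀, hω₀⟩ := hScard.exists
    have hne : (S ω₀).Nonempty := card_pos.mp (hω₀ ▸ hm)
    obtain ⟨i, -⟩ := hne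
    exact le_trans (integral_nonneg fun ω => by positivity) (hG i)
  set C : ℝ := 4 * η ^ 2 * (K : ℝ) ^ 2 with hCdef
  have hC0 : 0 ≤ C := by positivity
  -- indicator functions
  set ind : Fin n → Ω → ℝ := fun i ω => if i ∈ S ω then 1 else 0 with hind
  -- basic integrability
  have hndInt : ∀ i, Integrable (fun ω => ‖d i ω‖ ^ 2) ℙ := fun i => (hdL2 i).norm.integrable_sq
  have hwInt : ∀ i, Integrable (w i) ℙ := fun i => (hwL2 i).integrable one_le_two
  have hindMeas : ∀ i, Measurable (ind i) := fun i =>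
    (measurable_from_top (f := fun s : Finset (Fin n) => if i ∈ s then (1:ℝ) else 0)).comp hSmeas
  have hindInt : ∀ i, Integrable (ind i) ℙ := by
    intro i
    refine (integrable_const (1:ℝ)).mono' (hindMeas i).aestronglyMeasurable ?_
    refine ae_of_all _ fun ω => ?_
    simp only [hind]; split <;> simp
  -- independence
  have hIw : ∀ i, IndepFun (w i) (fun ω => ‖d i ω‖ ^ 2) ℙ := by
    intro i
    exact hindep.comp (φ := fun p : Finset (Fin n) × (Fin n → ℝ) => p.2 i)
      (ψ := fun v : Fin n → E => ‖v i‖ ^ 2)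
      ((measurable_pi_apply i).comp measurable_snd)
      (((measurable_pi_apply i).norm).pow_const 2)
  have hIind : ∀ i, IndepFun (ind i) (fun ω => ‖d i ω‖ ^ 2) ℙ := by
    intro i
    exact hindep.comp
      (φ := fun p : Finset (Fin n) × (Fin n → ℝ) => if i ∈ p.1 then (1:ℝ) else 0)
      (ψ := fun v : Fin n → E => ‖v i‖ ^ 2)
      ((measurable_from_top (f := fun s : Finset (Fin n) => if i ∈ s then (1:ℝ) else 0)).comp measurable_fst)
      (((measurable_pi_apply i).norm).pow_const 2)
  -- product integrability
  have hwdInt : ∀ i, Integrable (fun ω => w i ω * ‖d i ω‖ ^ 2) ℙ := fun i =>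
    (hIw i).integrable_mul (hwInt i) (hndInt i)
  have hinddInt : ∀ i, Integrable (fun ω => ind i ω * ‖d i ω‖ ^ 2) ℙ := fun i =>
    (hIind i).integrable_mul (hindInt i) (hndInt i)
  -- the dominating function
  set g : Ω → ℝ := fun ω =>
    C * (2 * m * (∑ i, w i ω * ‖d i ω‖ ^ 2) + 2 * ∑ i, ind i ω * ‖d i ω‖ ^ 2) with hgdef
  have hgInt : Integrable g ℙ := by
    refine Integrable.const_mul ?_ C
    exact ((integrable_finset_sum univ fun i _ => hwdInt i).const_mul _).add
      ((integrable_finset_sum univ fun i _ => hinddInt i).const_mul 2)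
  -- pointwise a.e. bound
  have hae : ∀ᵐ ω ∂ℙ, (∑ k ∈ S ω,
      ‖(η' * (K : ℝ)) • ∑ i ∈ S ω, w i ω • (d i ω - d k ω)‖ ^ 2) ≤ g ω := by
    filter_upwards [hScard, hsupp, hnorm] with ω hcard hs hn
    set v : E := ∑ i ∈ S ω, w i ω • d i ω with hv
    have hvk : ∀ k ∈ S ω, (∑ i ∈ S ω, w i ω • (d i ω - d k ω)) = v - d k ω := by
      intro k hk
      simp only [smul_sub, Finset.sum_sub_distrib, ← Finset.sum_smul, hn, one_smul, hv]
    -- Jensen : ‖v‖^2 ≤ ∑ over S of w * ‖d‖^2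
    have hJ : ‖v‖ ^ 2 ≤ ∑ i ∈ S ω, w i ω * ‖d i ω‖ ^ 2 := by
      have h1 : ‖v‖ ≤ ∑ i ∈ S ω, w i ω * ‖d i ω‖ := by
        refine (norm_sum_le _ _).trans (le_of_eq ?_)
        refine Finset.sum_congr rfl fun i _ => ?_
        rw [norm_smul, Real.norm_eq_abs, abs_of_nonneg (hw0 i ω)]
      have h2 : (∑ i ∈ S ω, w i ω * ‖d i ω‖) ^ 2
          ≤ (∑ i ∈ S ω, w i ω) * ∑ i ∈ S ω, w i ω * ‖d i ω‖ ^ 2 := by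
        have := Finset.sum_mul_sq_le_sq_mul_sq (S ω)
          (fun i => Real.sqrt (w i ω)) (fun i => Real.sqrt (w i ω) * ‖d i ω‖)
        calc (∑ i ∈ S ω, w i ω * ‖d i ω‖) ^ 2
            = (∑ i ∈ S ω, Real.sqrt (w i ω) * (Real.sqrt (w i ω) * ‖d i ω‖)) ^ 2 := by
              congr 1; refine Finset.sum_congr rfl fun i _ => ?_
              rw [← mul_assoc, Real.mul_self_sqrt (hw0 i ω)]
          _ ≤ (∑ i ∈ S ω, Real.sqrt (w i ω) ^ 2) *
                ∑ i ∈ S ω, (Real.sqrt (w i ω) * ‖d i ω‖) ^ 2 := this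
          _ = (∑ i ∈ S ω, w i ω) * ∑ i ∈ S ω, w i ω * ‖d i ω‖ ^ 2 := by
              congr 1
              · exact Finset.sum_congr rfl fun i _ => Real.sq_sqrt (hw0 i ω)
              · refine Finset.sum_congr rfl fun i _ => ?_
                rw [mul_pow, Real.sq_sqrt (hw0 i ω)]
      calc ‖v‖ ^ 2 ≤ (∑ i ∈ S ω, w i ω * ‖d i ω‖) ^ 2 := by
            exact pow_le_pow_left₀ (norm_nonneg v) h1 2
        _ ≤ (∑ i ∈ S ω, w i ω) * ∑ i ∈ S ω, w i ω * ‖d i ω‖ ^ 2 := h2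
        _ = ∑ i ∈ S ω, w i ω * ‖d i ω‖ ^ 2 := by rw [hn, one_mul]
    have hJ' : ‖v‖ ^ 2 ≤ ∑ i, w i ω * ‖d i ω‖ ^ 2 := by
      refine hJ.trans (Finset.sum_le_sum_of_subset_of_nonneg (Finset.subset_univ _)
        fun i _ _ => mul_nonneg (hw0 i ω) (by positivity))
    have hcoef : (η' * (K : ℝ)) ^ 2 ≤ C := by
      rw [hCdef]
      have h1 : η' ^ 2 ≤ 4 * η ^ 2 := by nlinarith
      have h2 : (0:ℝ) ≤ (K:ℝ) ^ 2 := by positivity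
      calc (η' * (K : ℝ)) ^ 2 = η' ^ 2 * (K : ℝ) ^ 2 := by ring
        _ ≤ 4 * η ^ 2 * (K : ℝ) ^ 2 := by nlinarith
    have hsum2 : ∑ k ∈ S ω, ‖d k ω‖ ^ 2 = ∑ i, ind i ω * ‖d i ω‖ ^ 2 := by
      rw [hind]
      simp only [ite_mul, one_mul, zero_mul]
      rw [Finset.sum_ite_mem, Finset.univ_inter]
    calc ∑ k ∈ S ω, ‖(η' * (K : ℝ)) • ∑ i ∈ S ω, w i ω • (d i ω - d k ω)‖ ^ 2
        = ∑ k ∈ S ω, (η' * (K : ℝ)) ^ 2 * ‖v - d k ω‖ ^ 2 := by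
          refine Finset.sum_congr rfl fun k hk => ?_
          rw [hvk k hk, norm_smul, mul_pow, Real.norm_eq_abs, sq_abs]
      _ ≤ ∑ k ∈ S ω, C * (2 * ‖v‖ ^ 2 + 2 * ‖d k ω‖ ^ 2) := by
          refine Finset.sum_le_sum fun k hk => ?_
          have hnn : ‖v - d k ω‖ ^ 2 ≤ 2 * ‖v‖ ^ 2 + 2 * ‖d k ω‖ ^ 2 := by
            have := norm_sub_le v (d k ω)
            nlinarith [norm_nonneg (v - d k ω), norm_nonneg v, norm_nonneg (d k ω),
              sq_nonneg (‖v‖ - ‖d k ω‖)]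
          calc (η' * (K : ℝ)) ^ 2 * ‖v - d k ω‖ ^ 2
              ≤ C * ‖v - d k ω‖ ^ 2 := by
                exact mul_le_mul_of_nonneg_right hcoef (by positivity)
            _ ≤ C * (2 * ‖v‖ ^ 2 + 2 * ‖d k ω‖ ^ 2) :=
                mul_le_mul_of_nonneg_left hnn hC0
      _ = C * (2 * m * ‖v‖ ^ 2 + 2 * ∑ k ∈ S ω, ‖d k ω‖ ^ 2) := by
          rw [← Finset.mul_sum, Finset.sum_add_distrib, Finset.sum_const, hcard,
            ← Finset.mul_sum, nsmul_eq_mul]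
          ring
      _ ≤ g ω := by
          rw [hgdef, hsum2]
          have : 2 * (m:ℝ) * ‖v‖ ^ 2 ≤ 2 * m * ∑ i, w i ω * ‖d i ω‖ ^ 2 := by
            exact mul_le_mul_of_nonneg_left hJ' (by positivity)
          exact mul_le_mul_of_nonneg_left (by linarith) hC0
  -- integral bound
  have hintle : (∫ ω, ∑ k ∈ S ω,
      ‖(η' * (K : ℝ)) • ∑ i ∈ S ω, w i ω • (d i ω - d k ω)‖ ^ 2 ∂ℙ) ≤ ∫ ω, g ω ∂ℙ := by
    refine integral_mono_of_nonneg (ae_of_all _ fun ω => ?_) hgInt hae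
    exact Finset.sum_nonneg fun k _ => by positivity
  -- compute/bound ∫ g
  have hEw : ∑ i, ∫ ω, w i ω ∂ℙ = 1 := by
    rw [← integral_finset_sum univ fun i _ => hwInt i]
    have : ∀ᵐ ω ∂ℙ, (∑ i, w i ω) = 1 := by
      filter_upwards [hsupp, hnorm] with ω hs hn
      rw [← hn]
      exact (Finset.sum_subset (Finset.subset_univ _) fun i _ hi => hs i hi).symm
    rw [integral_congr_ae this, integral_const, probReal_univ]
    simp
  have hEind : ∑ i, ∫ ω, ind i ω ∂ℙ = m := by
    rw [← integral_finset_sum univ fun i _ => hindInt i]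
    have : ∀ᵐ ω ∂ℙ, (∑ i, ind i ω) = (m : ℝ) := by
      filter_upwards [hScard] with ω hcard
      simp [hind, Finset.sum_ite_mem, hcard]
    rw [integral_congr_ae this, integral_const, probReal_univ]
    simp
  have hgle : (∫ ω, g ω ∂ℙ) ≤ C * (4 * m * G ^ 2) := by
    have h1 : (∫ ω, (∑ i, w i ω * ‖d i ω‖ ^ 2) ∂ℙ) ≤ G ^ 2 := by
      rw [integral_finset_sum univ fun i _ => hwdInt i]
      calc ∑ i, ∫ ω, w i ω * ‖d i ω‖ ^ 2 ∂ℙ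
          = ∑ i, (∫ ω, w i ω ∂ℙ) * ∫ ω, ‖d i ω‖ ^ 2 ∂ℙ := by
            refine Finset.sum_congr rfl fun i _ => ?_
            exact (hIw i).integral_fun_mul_eq_mul_integral (hwInt i).aestronglyMeasurable (hndInt i).aestronglyMeasurable
        _ ≤ ∑ i, (∫ ω, w i ω ∂ℙ) * G ^ 2 := by
            refine Finset.sum_le_sum fun i _ => ?_
            exact mul_le_mul_of_nonneg_left (hG i) (integral_nonneg (hw0 i))
        _ = G ^ 2 := by rw [← Finset.sum_mul, hEw, one_mul]
    have h2 : (∫ ω, (∑ i, ind i ω * ‖d i ω‖ ^ 2) ∂ℙ) ≤ m * G ^ 2 := by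
      rw [integral_finset_sum univ fun i _ => hinddInt i]
      calc ∑ i, ∫ ω, ind i ω * ‖d i ω‖ ^ 2 ∂ℙ
          = ∑ i, (∫ ω, ind i ω ∂ℙ) * ∫ ω, ‖d i ω‖ ^ 2 ∂ℙ := by
            refine Finset.sum_congr rfl fun i _ => ?_
            exact (hIind i).integral_fun_mul_eq_mul_integral (hindInt i).aestronglyMeasurable (hndInt i).aestronglyMeasurable
        _ ≤ ∑ i, (∫ ω, ind i ω ∂ℙ) * G ^ 2 := by
            refine Finset.sum_le_sum fun i _ => ?_
            refine mul_le_mul_of_nonneg_left (hG i) (integral_nonneg fun ω => ?_)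
            rw [hind]; dsimp only; split <;> norm_num
        _ = m * G ^ 2 := by rw [← Finset.sum_mul, hEind]
    rw [hgdef]
    rw [integral_const_mul]
    have h3 : (∫ ω, (2 * (m:ℝ) * (∑ i, w i ω * ‖d i ω‖ ^ 2)
        + 2 * ∑ i, ind i ω * ‖d i ω‖ ^ 2) ∂ℙ) ≤ 4 * m * G ^ 2 := by
      rw [integral_add (((integrable_finset_sum univ fun i _ => hwdInt i).const_mul _))
        ((integrable_finset_sum univ fun i _ => hinddInt i).const_mul 2),
        integral_const_mul, integral_const_mul]
      nlinarith [h1, h2]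
    exact mul_le_mul_of_nonneg_left h3 hC0
  -- finish
  have hm1 : (1:ℝ) ≤ (m:ℝ) := by exact_mod_cast hm
  have hSig : 0 ≤ ∑ i, variance (w i) ℙ := Finset.sum_nonneg fun i _ => variance_nonneg _ _
  have hfin : (1 / (m : ℝ)) * (C * (4 * m * G ^ 2)) ≤
      16 * G ^ 2 * η ^ 2 * (K : ℝ) ^ 2 * m * ((∑ i, variance (w i) ℙ) + 1) := by
    have hmpos : (0:ℝ) < m := by linarith
    rw [hCdef]
    rw [one_div, inv_mul_le_iff₀ hmpos]
    have hA : (0:ℝ) ≤ 16 * G ^ 2 * η ^ 2 * (K:ℝ) ^ 2 := by positivity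
    have hms : (1:ℝ) ≤ (m:ℝ) * ((∑ i, variance (w i) ℙ) + 1) := by nlinarith
    have hb : (16:ℝ) * G ^ 2 * η ^ 2 * (K:ℝ) ^ 2 ≤
        16 * G ^ 2 * η ^ 2 * (K : ℝ) ^ 2 * m * ((∑ i, variance (w i) ℙ) + 1) := by
      calc (16:ℝ) * G ^ 2 * η ^ 2 * (K:ℝ) ^ 2 = (16 * G ^ 2 * η ^ 2 * (K:ℝ) ^ 2) * 1 := by ring
        _ ≤ (16 * G ^ 2 * η ^ 2 * (K:ℝ) ^ 2) * ((m:ℝ) * ((∑ i, variance (w i) ℙ) + 1)) :=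
            mul_le_mul_of_nonneg_left hms hA
        _ = 16 * G ^ 2 * η ^ 2 * (K : ℝ) ^ 2 * m * ((∑ i, variance (w i) ℙ) + 1) := by ring
    calc 4 * η ^ 2 * (K:ℝ) ^ 2 * (4 * m * G ^ 2) = (16 * G ^ 2 * η ^ 2 * (K:ℝ) ^ 2) * m := by ring
      _ ≤ (16 * G ^ 2 * η ^ 2 * (K : ℝ) ^ 2 * m * ((∑ i, variance (w i) ℙ) + 1)) * m :=
          mul_le_mul_of_nonneg_right hb (le_of_lt hmpos)
      _ = (m:ℝ) * (16 * G ^ 2 * η ^ 2 * (K : ℝ) ^ 2 * m * ((∑ i, variance (w i) ℙ) + 1)) := by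
          ring
  refine le_trans ?_ hfin
  have h1m : 0 ≤ 1 / (m:ℝ) := by positivity
  exact mul_le_mul_of_nonneg_left (hintle.trans hgle) h1m
end
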